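/- Fix n ≥ 2. For every real r with 1/3 < r < 1 there exist A ∈ M_n(ℂ) with Tr(A) a nonnegative real number, a Hermitian S ∈ M_n(ℂ) with Re(A) ≤ S, and B ∈ M_n(ℂ) with Tr(S B) = 0, Tr(A B) = 0, and ‖B‖ ≤ 1, such that Tr(A) + ∑_{m=1}^∞ |Tr(A B*)| r^m > Tr(S). (For n = 2 one may take S = I_2, A with rows (1/2 + ik, 1/2), (1/2, 1/2 − ik), and B with rows (−θ/(2k), iθ), (iθ, θ/(2k)), where (1−r)/(2r) < θ < 1 and the integer k satisfies k > θ/(2(1−θ)); for n ≥ 3 pad these matrices with rows and columns of zeros.) -/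

import Mathlib

open Matrix
open scoped Matrix.Norms.L2Operator ComplexOrder

/-! The counterexample lives in a 2 × 2 corner. Take `S = 1`, `A = [[1/2 + ik, 1/2], [1/2, 1/2 - ik]]`
and `B = [[θ - 1, iθ], [iθ, 1 - θ]]` with `2k(1 - θ) = θ`. Then `S - Re A = ½[[1, -1], [-1, 1]] ≥ 0`,
`Tr B = Tr (A B) = 0`, `1 - B* B = 2θ(1 - θ) [[1, i], [-i, 1]] ≥ 0` (so `‖B‖ ≤ 1`) and
`|Tr (A B*)| = 2θ`. The Bohr sum is therefore `1 + 2θr / (1 - r)`, which exceeds `Tr S = 2` as soon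
as `θ > (1 - r) / (2r)`; such a `θ < 1` exists exactly when `r > 1/3`. Conjugating by the isometry
`ℂ² → ℂⁿ` onto the first two coordinates preserves every condition. -/

namespace Matrix

open scoped MatrixOrder in
theorem l2_opNorm_le_one_of_posSemidef_one_sub {m : Type*} [Fintype m] [DecidableEq m]
    {B : Matrix m m ℂ} (h : (1 - Bᴴ * B).PosSemidef) : ‖B‖ ≤ 1 := by
  have hBB : ‖Bᴴ * B‖ ≤ 1 :=
    (CStarAlgebra.norm_le_one_iff_of_nonneg _ (posSemidef_conjTranspose_mul_self B).nonneg).mpr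
      (le_iff.mpr h)
  rw [l2_opNorm_conjTranspose_mul_self] at hBB
  nlinarith [norm_nonneg B]

theorem l2_opNorm_le_one_of_conjTranspose_mul_self_eq_one {m k : Type*} [Fintype m]
    [Fintype k] [DecidableEq k] {V : Matrix m k ℂ} (hV : Vᴴ * V = 1) : ‖V‖ ≤ 1 := by
  have hV' := l2_opNorm_conjTranspose_mul_self V
  have h1 : ‖(1 : Matrix k k ℂ)‖ ≤ 1 := by
    rw [← l2_opNorm_toEuclideanCLM, map_one]
    exact ContinuousLinearMap.norm_id_le
  rw [hV] at hV'
  nlinarith [norm_nonneg V]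

theorem conjTranspose_submatrix_one_mul_submatrix_one {R m k : Type*} [Fintype m]
    [DecidableEq m] [DecidableEq k] [CommSemiring R] [StarRing R] {f : k → m}
    (hf : f.Injective) :
    ((1 : Matrix m m R).submatrix id f)ᴴ * (1 : Matrix m m R).submatrix id f = 1 := by
  rw [conjTranspose_submatrix, conjTranspose_one, ← submatrix_mul _ _ _ _ _ Function.bijective_id,
    Matrix.one_mul, submatrix_one f hf]

section Isometry

variable {R m k : Type*} [Fintype k] [CommSemiring R] [StarRing R] {V : Matrix m k R}

theorem conjTranspose_mul_mul_conjTranspose (M : Matrix k k R) :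
    (V * M * Vᴴ)ᴴ = V * Mᴴ * Vᴴ := by
  simp only [conjTranspose_mul, conjTranspose_conjTranspose, Matrix.mul_assoc]

variable [Fintype m] [DecidableEq k] (hV : Vᴴ * V = 1)
include hV

theorem trace_mul_mul_conjTranspose_of_isometry (M : Matrix k k R) :
    (V * M * Vᴴ).trace = M.trace := by
  rw [trace_mul_comm, ← Matrix.mul_assoc, hV, Matrix.one_mul]

theorem mul_mul_conjTranspose_mul_of_isometry (M N : Matrix k k R) :
    V * M * Vᴴ * (V * N * Vᴴ) = V * (M * N) * Vᴴ := by
  simp only [Matrix.mul_assoc]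
  rw [← Matrix.mul_assoc Vᴴ, hV, Matrix.one_mul]

end Isometry

end Matrix

open Complex

def IsBohrViolation {ι : Type*} [Fintype ι] [DecidableEq ι] (r : ℝ) (A S B : Matrix ι ι ℂ) :
    Prop :=
  0 ≤ A.trace ∧
  S.IsHermitian ∧
  (S - (2 : ℂ)⁻¹ • (A + Aᴴ)).PosSemidef ∧
  (S * B).trace = 0 ∧
  (A * B).trace = 0 ∧
  ‖B‖ ≤ 1 ∧
  A.trace.re + ∑' m : ℕ, ‖(A * Bᴴ).trace‖ * r ^ (m + 1) > S.trace.re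

theorem IsBohrViolation.isometry_conj {m k : Type*} [Fintype m] [DecidableEq m] [Fintype k]
    [DecidableEq k] {r : ℝ} {A S B : Matrix k k ℂ} (h : IsBohrViolation r A S B)
    {V : Matrix m k ℂ} (hV : Vᴴ * V = 1) :
    IsBohrViolation r (V * A * Vᴴ) (V * S * Vᴴ) (V * B * Vᴴ) := by
  obtain ⟨hA, hS, hSA, hSB, hAB, hB, hsum⟩ := h
  have hre : V * S * Vᴴ - (2 : ℂ)⁻¹ • (V * A * Vᴴ + (V * A * Vᴴ)ᴴ) =
      V * (S - (2 : ℂ)⁻¹ • (A + Aᴴ)) * Vᴴ := by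
    simp only [conjTranspose_mul_mul_conjTranspose, Matrix.mul_sub, Matrix.sub_mul,
      Matrix.mul_add, Matrix.add_mul, Matrix.mul_smul, Matrix.smul_mul]
  have hV1 := l2_opNorm_le_one_of_conjTranspose_mul_self_eq_one hV
  refine ⟨?_, ?_, ?_, ?_, ?_, ?_, ?_⟩
  · rwa [trace_mul_mul_conjTranspose_of_isometry hV]
  · rw [IsHermitian, conjTranspose_mul_mul_conjTranspose, hS.eq]
  · rw [hre]
    exact hSA.mul_mul_conjTranspose_same V
  · rwa [mul_mul_conjTranspose_mul_of_isometry hV, trace_mul_mul_conjTranspose_of_isometry hV]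
  · rwa [mul_mul_conjTranspose_mul_of_isometry hV, trace_mul_mul_conjTranspose_of_isometry hV]
  · calc ‖V * B * Vᴴ‖ ≤ ‖V * B‖ * ‖Vᴴ‖ := l2_opNorm_mul _ _
      _ ≤ ‖V‖ * ‖B‖ * ‖V‖ := by
        rw [l2_opNorm_conjTranspose]
        gcongr
        exact l2_opNorm_mul _ _
      _ ≤ 1 * 1 * 1 := by gcongr
      _ = 1 := by norm_num
  · rwa [conjTranspose_mul_mul_conjTranspose, mul_mul_conjTranspose_mul_of_isometry hV,
      trace_mul_mul_conjTranspose_of_isometry hV, trace_mul_mul_conjTranspose_of_isometry hV,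
      trace_mul_mul_conjTranspose_of_isometry hV]

noncomputable def bohrA (k : ℝ) : Matrix (Fin 2) (Fin 2) ℂ :=
  !![1 / 2 + k * I, 1 / 2; 1 / 2, 1 / 2 - k * I]

noncomputable def bohrB (θ : ℝ) : Matrix (Fin 2) (Fin 2) ℂ :=
  !![θ - 1, θ * I; θ * I, 1 - θ]

theorem trace_bohrA (k : ℝ) : (bohrA k).trace = 1 := by
  simp [bohrA, trace_fin_two]; ring

theorem trace_bohrB (θ : ℝ) : (bohrB θ).trace = 0 := by
  simp [bohrB, trace_fin_two]

theorem conjTranspose_bohrB (θ : ℝ) :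
    (bohrB θ)ᴴ = !![(θ : ℂ) - 1, -θ * I; -θ * I, 1 - θ] := by
  ext i j; fin_cases i <;> fin_cases j <;> simp [bohrB, conjTranspose_apply]

theorem posSemidef_one_sub_re_bohrA (k : ℝ) :
    (1 - (2 : ℂ)⁻¹ • (bohrA k + (bohrA k)ᴴ)).PosSemidef := by
  set C : Matrix (Fin 2) (Fin 2) ℂ := !![1 / 2, -1 / 2; 1 / 2, -1 / 2]
  have hC : 1 - (2 : ℂ)⁻¹ • (bohrA k + (bohrA k)ᴴ) = Cᴴ * C := by
    ext i j; fin_cases i <;> fin_cases j <;>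
      simp [C, bohrA, conjTranspose_apply, Matrix.mul_apply, Fin.sum_univ_two, Complex.ext_iff,
        map_ofNat] <;> norm_num
  rw [hC]
  exact posSemidef_conjTranspose_mul_self C

theorem l2_opNorm_bohrB_le_one {θ : ℝ} (h0 : 0 ≤ θ) (h1 : θ ≤ 1) : ‖bohrB θ‖ ≤ 1 := by
  set C : Matrix (Fin 2) (Fin 2) ℂ := !![1, I; 0, 0]
  have hC : 1 - (bohrB θ)ᴴ * bohrB θ = ((2 * θ * (1 - θ) : ℝ) : ℂ) • (Cᴴ * C) := by
    rw [conjTranspose_bohrB]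
    ext i j; fin_cases i <;> fin_cases j <;>
      simp [C, bohrB, conjTranspose_apply, Matrix.mul_apply, Fin.sum_univ_two] <;>
      ring_nf <;> simp [I_sq] <;> ring
  apply l2_opNorm_le_one_of_posSemidef_one_sub
  rw [hC]
  exact (posSemidef_conjTranspose_mul_self C).smul
    (Complex.zero_le_real.mpr (by nlinarith))

theorem trace_bohrA_mul_bohrB {k θ : ℝ} (h : 2 * k * (1 - θ) = θ) :
    (bohrA k * bohrB θ).trace = 0 := by
  have hC : 2 * (k : ℂ) * (1 - θ) = θ := by exact_mod_cast h
  simp [bohrA, bohrB, trace_fin_two]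
  linear_combination -I * hC

theorem trace_bohrA_mul_conjTranspose_bohrB {k θ : ℝ} (h : 2 * k * (1 - θ) = θ) :
    (bohrA k * (bohrB θ)ᴴ).trace = -2 * θ * I := by
  have hC : 2 * (k : ℂ) * (1 - θ) = θ := by exact_mod_cast h
  rw [conjTranspose_bohrB]
  simp [bohrA, trace_fin_two]
  linear_combination -I * hC

theorem tsum_mul_pow_succ {r : ℝ} (c : ℝ) (h0 : 0 ≤ r) (h1 : r < 1) :
    ∑' m : ℕ, c * r ^ (m + 1) = c * r / (1 - r) := by
  simp_rw [pow_succ', ← mul_assoc]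
  rw [tsum_mul_left, tsum_geometric_of_lt_one h0 h1, div_eq_mul_inv]

theorem isBohrViolation_bohrA_one_bohrB {r θ : ℝ} (hr0 : 0 < r) (hr1 : r < 1)
    (hθ : (1 - r) / (2 * r) < θ) (hθ1 : θ < 1) :
    IsBohrViolation r (bohrA (θ / (2 * (1 - θ)))) 1 (bohrB θ) := by
  have hθ0 : 0 < θ := (div_pos (by linarith) (by linarith)).trans hθ
  have hk : 2 * (θ / (2 * (1 - θ))) * (1 - θ) = θ := by
    field_simp [(by linarith : 1 - θ ≠ 0)]
  refine ⟨by simp [trace_bohrA], isHermitian_one, posSemidef_one_sub_re_bohrA _,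
    by rw [Matrix.one_mul, trace_bohrB], trace_bohrA_mul_bohrB hk,
    l2_opNorm_bohrB_le_one hθ0.le hθ1.le, ?_⟩
  have hnorm : ‖(-2 * θ * I : ℂ)‖ = 2 * θ := by simp [abs_of_pos hθ0]
  rw [trace_bohrA, trace_bohrA_mul_conjTranspose_bohrB hk, hnorm, tsum_mul_pow_succ _ hr0.le hr1,
    trace_one]
  have hgain : 1 < 2 * θ * r / (1 - r) := by
    rw [lt_div_iff₀ (by linarith)]
    nlinarith [(div_lt_iff₀' (by positivity)).mp hθ]
  norm_num
  linarith

/-- `1/3` is optimal, for every fixed `n ≥ 2`, in the generalized matrix Bohr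
inequality with trace-orthogonality conditions. -/
theorem bohr_matrix_trace_orthogonal_optimality (n : ℕ) (hn : 2 ≤ n)
    (r : ℝ) (hr1 : 1 / 3 < r) (hr2 : r < 1) :
    ∃ A S B : Matrix (Fin n) (Fin n) ℂ,
      0 ≤ A.trace ∧
      S.IsHermitian ∧
      (S - (2 : ℂ)⁻¹ • (A + Aᴴ)).PosSemidef ∧
      (S * B).trace = 0 ∧
      (A * B).trace = 0 ∧
      ‖B‖ ≤ 1 ∧
      A.trace.re + ∑' m : ℕ, ‖(A * Bᴴ).trace‖ * r ^ (m + 1) >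
        S.trace.re := by
  have hr0 : 0 < r := by linarith
  obtain ⟨θ, hθ, hθ1⟩ : ∃ θ, (1 - r) / (2 * r) < θ ∧ θ < 1 :=
    exists_between ((div_lt_one (by positivity)).mpr (by linarith))
  have hV := conjTranspose_submatrix_one_mul_submatrix_one (R := ℂ) (Fin.castLE_injective hn)
  exact ⟨_, _, _, (isBohrViolation_bohrA_one_bohrB hr0 hr2 hθ hθ1).isometry_conj hV⟩
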